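/- Let A be the quadratic closure of the cohomology of Conf(E*,2): the exterior ℂ-algebra on degree-1 generators a₁,b₁,a₂,b₂ modulo the ideal generated by a₁b₂ + a₂b₁, a₁b₁, a₂b₂ (in degree 2), with zero differential. Then the first resonance variety R^1(A) ⊂ ℂ⁴ (coordinates x₁,y₁,x₂,y₂ dual to a₁,b₁,a₂,b₂) is the quadric hypersurface {x₁y₂ - x₂y₁ = 0}. -/

import Mathlib

open Submodule

/-- The grading of the quadratic closure `A` of `H^•(Conf(E*, 2), ℂ)`: the
exterior algebra on degree-1 generators `a₁, b₁, a₂, b₂` modulo the degree-2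
relations `a₁b₂ + a₂b₁ = a₁b₁ = a₂b₂ = 0`; so `A⁰ = ℂ`, `A¹` has basis
`a₁, b₁, a₂, b₂`, `A²` has basis `a₁a₂, a₁b₂, b₁b₂`, and `A^i = 0` for
`i ≥ 3`. -/
def grConf {A : Type} [Ring A] [Algebra ℂ A] (a1 b1 a2 b2 : A) :
    ℕ → Submodule ℂ A
  | 0 => span ℂ {1}
  | 1 => span ℂ {a1, b1, a2, b2}
  | 2 => span ℂ {a1 * a2, a1 * b2, b1 * b2}
  | _ + 3 => ⊥

/-- `H^i(A, δ_ω) ≠ 0`, with `δ_ω` left multiplication by `ω`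
(zero differential). -/
def ResMem {A : Type} [Ring A] [Algebra ℂ A] (𝒜 : ℕ → Submodule ℂ A)
    (ω : A) (i : ℕ) : Prop :=
  ∃ u ∈ 𝒜 i, ω * u = 0 ∧ ∀ v ∈ 𝒜 (i - 1), ω * v ≠ u

/-!
Write `ω = x₁a₁ + y₁b₁ + x₂a₂ + y₂b₂` and `u = p a₁ + q b₁ + r a₂ + s b₂`. In the basis
`a₁a₂, a₁b₂, b₁b₂` of `A²` the product `ωu` has three coefficients, bilinear in `(x, y)` and
`(p, q, r, s)`, and `ωω = 0`; so `H¹(A, δ_ω) ≠ 0` exactly when the kernel of `u ↦ ωu` is bigger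
than `ℂω`. If `Δ = x₁y₂ - x₂y₁ ≠ 0`, the three equations force `u ∈ ℂω`.
If `Δ = 0`, one of `x₁b₁ + x₂b₂`, `y₁a₁ + y₂a₂`, `a₁` lies in the kernel but not in `ℂω`.
-/

section Syzygies

variable {K : Type*}

/-- The three coefficients of `ω u` on `a₁a₂, a₁b₂, b₁b₂` for `ω = x₁a₁ + y₁b₁ + x₂a₂ + y₂b₂`
and `u = p a₁ + q b₁ + r a₂ + s b₂` (see `ConfRelations.mul_eq`) vanish. -/
def CupVanishes [CommRing K] (x1 y1 x2 y2 p q r s : K) : Prop :=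
  x1 * r - x2 * p = 0 ∧ x1 * s + y1 * r - x2 * q - y2 * p = 0 ∧ y1 * s - y2 * q = 0

theorem CupVanishes.exists_eq_mul [Field K] {x1 y1 x2 y2 p q r s : K}
    (h : CupVanishes x1 y1 x2 y2 p q r s) (hΔ : x1 * y2 - x2 * y1 ≠ 0) :
    ∃ c, p = c * x1 ∧ q = c * y1 ∧ r = c * x2 ∧ s = c * y2 := by
  obtain ⟨e1, e2, e3⟩ := h
  -- `c` is read off from `p y₂ - r y₁ = c (x₁y₂ - x₂y₁)`.
  refine ⟨(p * y2 - r * y1) / (x1 * y2 - x2 * y1), ?_, ?_, ?_, ?_⟩ <;>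
    rw [div_mul_eq_mul_div, eq_div_iff hΔ]
  · linear_combination y1 * e1
  · linear_combination y1 * e2 - x1 * e3
  · linear_combination y2 * e1
  · linear_combination y2 * e2 - x2 * e3

theorem exists_cupVanishes_of_det_eq_zero [CommRing K] [IsDomain K] {x1 y1 x2 y2 : K}
    (hΔ : x1 * y2 - x2 * y1 = 0) :
    ∃ p q r s, CupVanishes x1 y1 x2 y2 p q r s ∧
      ¬ ∃ c, p = c * x1 ∧ q = c * y1 ∧ r = c * x2 ∧ s = c * y2 := by
  by_cases hx : x1 = 0 ∧ x2 = 0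
  · obtain ⟨rfl, rfl⟩ := hx
    by_cases hy : y1 = 0 ∧ y2 = 0
    · obtain ⟨rfl, rfl⟩ := hy
      refine ⟨1, 0, 0, 0, by simp [CupVanishes], ?_⟩
      rintro ⟨c, h, -⟩
      simp at h
    · refine ⟨y1, 0, y2, 0, ⟨by ring, by ring, by ring⟩, ?_⟩
      rintro ⟨c, h1, -, h2, -⟩
      simp_all
  · refine ⟨0, x1, 0, x2, ⟨by ring, by ring, by linear_combination -hΔ⟩, ?_⟩
    rintro ⟨c, h1, h2, h3, h4⟩
    refine hx ⟨pow_eq_zero_iff two_ne_zero |>.mp ?_, pow_eq_zero_iff two_ne_zero |>.mp ?_⟩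
    · linear_combination x1 * h2 - y1 * h1
    · linear_combination x2 * h4 - y2 * h3

theorem exists_cupVanishes_iff [Field K] {x1 y1 x2 y2 : K} :
    (∃ p q r s, CupVanishes x1 y1 x2 y2 p q r s ∧
      ¬ ∃ c, p = c * x1 ∧ q = c * y1 ∧ r = c * x2 ∧ s = c * y2) ↔
      x1 * y2 - x2 * y1 = 0 := by
  refine ⟨?_, exists_cupVanishes_of_det_eq_zero⟩
  rintro ⟨p, q, r, s, h, hne⟩
  by_contra hΔ
  exact hne (h.exists_eq_mul hΔ)

end Syzygies

section Relations

variable {K A : Type*} [CommRing K] [Ring A] [Algebra K A]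

structure ConfRelations (a1 b1 a2 b2 : A) : Prop where
  a1_mul_a1 : a1 * a1 = 0
  b1_mul_b1 : b1 * b1 = 0
  a2_mul_a2 : a2 * a2 = 0
  b2_mul_b2 : b2 * b2 = 0
  b1_mul_a1 : b1 * a1 = -(a1 * b1)
  a2_mul_a1 : a2 * a1 = -(a1 * a2)
  b2_mul_a1 : b2 * a1 = -(a1 * b2)
  a2_mul_b1 : a2 * b1 = -(b1 * a2)
  b2_mul_b1 : b2 * b1 = -(b1 * b2)
  b2_mul_a2 : b2 * a2 = -(a2 * b2)
  a1_mul_b1 : a1 * b1 = 0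
  a2_mul_b2 : a2 * b2 = 0
  a1_mul_b2_add_a2_mul_b1 : a1 * b2 + a2 * b1 = 0

theorem ConfRelations.mul_eq {a1 b1 a2 b2 : A} (h : ConfRelations a1 b1 a2 b2)
    (x1 y1 x2 y2 p q r s : K) :
    (x1 • a1 + y1 • b1 + x2 • a2 + y2 • b2) * (p • a1 + q • b1 + r • a2 + s • b2) =
      (x1 * r - x2 * p) • (a1 * a2) + (x1 * s + y1 * r - x2 * q - y2 * p) • (a1 * b2) +
        (y1 * s - y2 * q) • (b1 * b2) := by
  have a2_mul_b1 : a2 * b1 = -(a1 * b2) :=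
    eq_neg_of_add_eq_zero_right h.a1_mul_b2_add_a2_mul_b1
  have b1_mul_a2 : b1 * a2 = a1 * b2 := neg_injective (h.a2_mul_b1.symm.trans a2_mul_b1)
  simp only [add_mul, mul_add, smul_mul_smul_comm, h.a1_mul_a1, h.b1_mul_b1, h.a2_mul_a1,
    h.a2_mul_a2, h.b2_mul_b2, h.b1_mul_a1, h.b2_mul_a1, h.b2_mul_b1, h.b2_mul_a2, h.a1_mul_b1,
    h.a2_mul_b2, a2_mul_b1, b1_mul_a2, neg_zero, smul_neg, smul_zero, add_zero, zero_add]
  module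

end Relations

section Coordinates

variable {R M : Type*} [Ring R] [AddCommGroup M] [Module R M]

lemma LinearIndependent.eq_zero_of_triple {x y z : M} (h : LinearIndependent R ![x, y, z])
    {s t u : R} (h' : s • x + t • y + u • z = 0) : s = 0 ∧ t = 0 ∧ u = 0 := by
  have := Fintype.linearIndependent_iff.mp h ![s, t, u] (by simpa [Fin.sum_univ_three] using h')
  exact ⟨this 0, this 1, this 2⟩

lemma LinearIndependent.eq_of_quadruple {w x y z : M} (h : LinearIndependent R ![w, x, y, z])
    {s t u v s' t' u' v' : R}
    (h' : s • w + t • x + u • y + v • z = s' • w + t' • x + u' • y + v' • z) :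
    s = s' ∧ t = t' ∧ u = u' ∧ v = v' := by
  have := Fintype.linearIndependent_iffₛ.mp h ![s, t, u, v] ![s', t', u', v']
    (by simpa [Fin.sum_univ_four] using h')
  exact ⟨this 0, this 1, this 2, this 3⟩

end Coordinates

section Resonance

variable {A : Type} [Ring A] [Algebra ℂ A] {a1 b1 a2 b2 : A}

theorem mem_grConf_one {u : A} :
    u ∈ grConf a1 b1 a2 b2 1 ↔ ∃ p q r s : ℂ, p • a1 + q • b1 + r • a2 + s • b2 = u := by
  simp only [grConf, mem_span_insert, mem_span_singleton]
  constructor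
  · rintro ⟨p, -, ⟨q, -, ⟨r, -, ⟨s, rfl⟩, rfl⟩, rfl⟩, rfl⟩
    exact ⟨p, q, r, s, by abel⟩
  · rintro ⟨p, q, r, s, rfl⟩
    exact ⟨p, _, ⟨q, _, ⟨r, _, ⟨s, rfl⟩, rfl⟩, rfl⟩, by abel⟩

theorem resMem_grConf_one_iff (h : ConfRelations a1 b1 a2 b2)
    (hind₁ : LinearIndependent ℂ ![a1, b1, a2, b2])
    (hind₂ : LinearIndependent ℂ ![a1 * a2, a1 * b2, b1 * b2]) (x1 y1 x2 y2 : ℂ) :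
    ResMem (grConf a1 b1 a2 b2) (x1 • a1 + y1 • b1 + x2 • a2 + y2 • b2) 1 ↔
      ∃ p q r s, CupVanishes x1 y1 x2 y2 p q r s ∧
        ¬ ∃ c, p = c * x1 ∧ q = c * y1 ∧ r = c * x2 ∧ s = c * y2 := by
  have cocycle_iff (p q r s : ℂ) :
      (x1 • a1 + y1 • b1 + x2 • a2 + y2 • b2) * (p • a1 + q • b1 + r • a2 + s • b2) = 0 ↔
        CupVanishes x1 y1 x2 y2 p q r s := by
    rw [h.mul_eq]
    refine ⟨hind₂.eq_zero_of_triple, ?_⟩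
    rintro ⟨e1, e2, e3⟩
    rw [e1, e2, e3]
    simp
  have coboundary_iff (p q r s c : ℂ) :
      (x1 • a1 + y1 • b1 + x2 • a2 + y2 • b2) * c • 1 = p • a1 + q • b1 + r • a2 + s • b2 ↔
        p = c * x1 ∧ q = c * y1 ∧ r = c * x2 ∧ s = c * y2 := by
    have hsmul : (x1 • a1 + y1 • b1 + x2 • a2 + y2 • b2) * c • 1 =
        (c * x1) • a1 + (c * y1) • b1 + (c * x2) • a2 + (c * y2) • b2 := by
      rw [mul_smul_comm, mul_one]
      module
    rw [hsmul]
    constructor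
    · intro e
      obtain ⟨h1, h2, h3, h4⟩ := hind₁.eq_of_quadruple e
      exact ⟨h1.symm, h2.symm, h3.symm, h4.symm⟩
    · rintro ⟨rfl, rfl, rfl, rfl⟩
      rfl
  constructor
  · rintro ⟨u, hu, hωu, hne⟩
    obtain ⟨p, q, r, s, rfl⟩ := mem_grConf_one.mp hu
    refine ⟨p, q, r, s, (cocycle_iff p q r s).mp hωu, ?_⟩
    rintro ⟨c, hc⟩
    exact hne (c • 1) (smul_mem _ c (mem_span_singleton_self 1)) ((coboundary_iff ..).mpr hc)
  · rintro ⟨p, q, r, s, hcup, hne⟩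
    refine ⟨_, mem_grConf_one.mpr ⟨p, q, r, s, rfl⟩, (cocycle_iff p q r s).mpr hcup, ?_⟩
    intro v hv e
    obtain ⟨c, rfl⟩ := mem_span_singleton.mp hv
    exact hne ⟨c, (coboundary_iff ..).mp e⟩

end Resonance

/-- let `A` be the exterior `ℂ`-algebra on degree-1 generators
`a₁, b₁, a₂, b₂` modulo the ideal generated by `a₁b₂ + a₂b₁`, `a₁b₁`, `a₂b₂`,
with zero differential.  Then the first resonance variety `R¹(A) ⊆ ℂ⁴`
(coordinates `x₁, y₁, x₂, y₂` dual to `a₁, b₁, a₂, b₂`) is the quadric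
hypersurface `{x₁y₂ - x₂y₁ = 0}`. -/
theorem statement_17 (A : Type) [Ring A] [Algebra ℂ A] (a1 b1 a2 b2 : A)
    (hind : LinearIndependent ℂ
      ![(1 : A), a1, b1, a2, b2, a1 * a2, a1 * b2, b1 * b2])
    (ha1 : a1 * a1 = 0) (hb1 : b1 * b1 = 0)
    (ha2 : a2 * a2 = 0) (hb2 : b2 * b2 = 0)
    (hc1 : b1 * a1 = -(a1 * b1)) (hc2 : a2 * a1 = -(a1 * a2))
    (hc3 : b2 * a1 = -(a1 * b2)) (hc4 : a2 * b1 = -(b1 * a2))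
    (hc5 : b2 * b1 = -(b1 * b2)) (hc6 : b2 * a2 = -(a2 * b2))
    (hrel1 : a1 * b1 = 0) (hrel2 : a2 * b2 = 0)
    (hrel3 : a1 * b2 + a2 * b1 = 0) :
    ∀ x1 y1 x2 y2 : ℂ,
      ResMem (grConf a1 b1 a2 b2)
          (x1 • a1 + y1 • b1 + x2 • a2 + y2 • b2) 1
        ↔ x1 * y2 - x2 * y1 = 0 := by
  have hrels : ConfRelations a1 b1 a2 b2 :=
    ⟨ha1, hb1, ha2, hb2, hc1, hc2, hc3, hc4, hc5, hc6, hrel1, hrel2, hrel3⟩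
  have hind₁ : LinearIndependent ℂ ![a1, b1, a2, b2] := by
    convert hind.comp ![1, 2, 3, 4] (by decide) using 1
    ext i; fin_cases i <;> rfl
  have hind₂ : LinearIndependent ℂ ![a1 * a2, a1 * b2, b1 * b2] := by
    convert hind.comp ![5, 6, 7] (by decide) using 1
    ext i; fin_cases i <;> rfl
  intro x1 y1 x2 y2
  rw [resMem_grConf_one_iff hrels hind₁ hind₂, exists_cupVanishes_iff]
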